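/- Let k ≥ 2, let λ₁,…,λ_k ≥ 1 and μ₁,…,μ_k ≥ 0, and let L₁,…,L_k be unary languages of the form L_i = {a^{μ_i}}·Y_i where each Y_i is a λ_i-cyclic unary language. Let d = gcd(λ₁,…,λ_k) and μ = μ₁+⋯+μ_k + d·f(λ₁/d,…,λ_k/d) − (k−1) (a natural number). Then for every natural number m ≥ μ, a^m ∈ L₁L₂⋯L_k if and only if a^{m+d} ∈ L₁L₂⋯L_k; consequently L₁L₂⋯L_k is accepted by a DFA with μ + d states. Moreover, this bound is tight: for the particular languages L_i = {a^{μ_i+λ_i−1+t·λ_i} : t ≥ 0}, every DFA accepting L₁L₂⋯L_k has at least μ + d states. -/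

import Mathlib

def tailCycleLang (μ lam : ℕ) : Language Unit :=
  {w | ∃ t : ℕ, w.length = μ + lam - 1 + t * lam}

lemma unit_word (w : List Unit) : w = List.replicate w.length () := by
  induction w with
  | nil => rfl
  | cons a t ih => cases a; simp [List.replicate_succ, ← ih]

lemma replicate_mem_prod_ofFn : ∀ (k : ℕ) (L : Fin k → Language Unit) (m : ℕ),
    (List.replicate m () ∈ (List.ofFn L).prod ↔
      ∃ y : Fin k → ℕ, (∀ i, List.replicate (y i) () ∈ L i) ∧ ∑ i, y i = m) := by
  intro k
  induction k with
  | zero =>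
    intro L m
    simp only [List.ofFn_zero, List.prod_nil, Language.mem_one, List.replicate_eq_nil_iff]
    constructor
    · rintro rfl; exact ⟨fun i => 0, fun i => i.elim0, by simp⟩
    · rintro ⟨y, _, hs⟩; simpa using hs.symm
  | succ n ih =>
    intro L m
    rw [List.ofFn_succ, List.prod_cons, Language.mem_mul]
    constructor
    · rintro ⟨a, ha, b, hb, hab⟩
      have hlen : a.length + b.length = m := by
        have := congrArg List.length hab; simpa using this
      rw [unit_word a] at ha
      rw [unit_word b] at hb
      obtain ⟨y, hy, hsum⟩ := (ih _ _).mp hb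
      refine ⟨Fin.cons a.length y, ?_, ?_⟩
      · intro i
        refine Fin.cases ?_ ?_ i
        · simpa using ha
        · intro j; simpa using hy j
      · rw [Fin.sum_univ_succ]
        simpa [hsum] using hlen
    · rintro ⟨y, hy, hsum⟩
      refine ⟨List.replicate (y 0) (), hy 0,
        List.replicate (∑ i : Fin n, y i.succ) (),
        (ih _ _).mpr ⟨fun i => y i.succ, fun i => hy i.succ, rfl⟩, ?_⟩
      rw [← List.replicate_add, ← hsum, Fin.sum_univ_succ]

lemma rep_lemma {k : ℕ} (d f : ℕ) (n lam : Fin k → ℕ)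
    (hdn : ∀ i, d * n i = lam i)
    (hrep : ∀ N, f < N → ∃ c : Fin k → ℕ, (∀ i, 1 ≤ c i) ∧ ∑ i, c i * n i = N)
    (S : ℕ) (hdvd : d ∣ S) (hS : d * f + 1 ≤ S + ∑ i, lam i) :
    ∃ t : Fin k → ℕ, ∑ i, t i * lam i = S := by
  obtain ⟨T, rfl⟩ := hdvd
  have hls : ∑ i, lam i = d * ∑ i, n i := by
    rw [Finset.mul_sum]; exact Finset.sum_congr rfl fun i _ => (hdn i).symm
  have h1 : f < T + ∑ i, n i := by
    have h2 : d * f < d * (T + ∑ i, n i) := by rw [Nat.mul_add]; omega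
    exact Nat.lt_of_mul_lt_mul_left h2
  obtain ⟨c, hc1, hcs⟩ := hrep _ h1
  refine ⟨fun i => c i - 1, ?_⟩
  have key : ∑ i, (c i - 1) * n i + ∑ i, n i = T + ∑ i, n i := by
    rw [← hcs, ← Finset.sum_add_distrib]
    refine Finset.sum_congr rfl fun i _ => ?_
    have h3 : (c i - 1 + 1) = c i := Nat.succ_pred_eq_of_pos (hc1 i)
    calc (c i - 1) * n i + n i = (c i - 1 + 1) * n i := by ring
      _ = c i * n i := by rw [h3]
  have hT : ∑ i, (c i - 1) * n i = T := by omega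
  calc ∑ i, (c i - 1) * lam i = ∑ i, d * ((c i - 1) * n i) :=
        Finset.sum_congr rfl fun i _ => by rw [← hdn i]; ring
    _ = d * ∑ i, (c i - 1) * n i := (Finset.mul_sum _ _ _).symm
    _ = d * T := by rw [hT]

/-- Concatenation of `k ≥ 2` unary languages `Lᵢ = {a^{μᵢ}}·Yᵢ` with `Yᵢ`
`λᵢ`-cyclic.  Here `d = gcd(λ₁,…,λ_k)`, `f` is the modified Frobenius number of
`(λ₁/d,…,λ_k/d)` (greatest natural number not expressible as a positive combination), and
`μ = μ₁+⋯+μ_k + d·f − (k−1)`.  Membership of `a^m` in `L₁⋯L_k` is `d`-periodic from `μ` on,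
so `L₁⋯L_k` is accepted by a DFA with `μ + d` states; and for the particular languages
`Lᵢ = {a^{μᵢ+λᵢ−1+t·λᵢ} : t ≥ 0}` every DFA accepting `L₁⋯L_k` has at least `μ + d` states. -/
theorem stmt18 (k : ℕ) (hk : 2 ≤ k) (lam μ : Fin k → ℕ) (hlam : ∀ i, 1 ≤ lam i)
    (f : ℕ)
    (hf : IsGreatest
      {t : ℕ | ¬ ∃ c : Fin k → ℕ, (∀ i, 1 ≤ c i) ∧
        ∑ i, c i * (lam i / Finset.univ.gcd lam) = t} f) :
    (∀ L Y : Fin k → Language Unit,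
      (∀ i, ∀ m : ℕ, List.replicate m () ∈ Y i ↔ List.replicate (m + lam i) () ∈ Y i) →
      (∀ i, L i = {List.replicate (μ i) ()} * Y i) →
      (∀ m : ℕ, (∑ i, μ i) + Finset.univ.gcd lam * f - (k - 1) ≤ m →
        (List.replicate m () ∈ (List.ofFn L).prod ↔
          List.replicate (m + Finset.univ.gcd lam) () ∈ (List.ofFn L).prod)) ∧
      ∃ (Q : Type) (_ : Fintype Q) (D : DFA Unit Q),
        D.accepts = (List.ofFn L).prod ∧
        Fintype.card Q =
          ((∑ i, μ i) + Finset.univ.gcd lam * f - (k - 1)) + Finset.univ.gcd lam) ∧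
    (∀ (Q : Type) (inst : Fintype Q) (D : DFA Unit Q),
      D.accepts = (List.ofFn fun i => tailCycleLang (μ i) (lam i)).prod →
      ((∑ i, μ i) + Finset.univ.gcd lam * f - (k - 1)) + Finset.univ.gcd lam
        ≤ @Fintype.card Q inst) := by
  set d : ℕ := Finset.univ.gcd lam with hdDef
  set n : Fin k → ℕ := fun i => lam i / d with hnDef
  -- basic facts
  have i0 : Fin k := ⟨0, by omega⟩
  have hdvd : ∀ i, d ∣ lam i := fun i => Finset.gcd_dvd (Finset.mem_univ i)
  have hd1 : 1 ≤ d := by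
    rcases Nat.eq_zero_or_pos d with h | h
    · have := hdvd i0
      rw [h] at this
      have := Nat.eq_zero_of_zero_dvd this
      have := hlam i0; omega
    · exact h
  have hdn : ∀ i, d * n i = lam i := fun i => Nat.mul_div_cancel' (hdvd i)
  have hn1 : ∀ i, 1 ≤ n i := fun i =>
    Nat.div_pos (Nat.le_of_dvd (hlam i) (hdvd i)) hd1
  have hrepAll : ∀ N, f < N → ∃ c : Fin k → ℕ, (∀ i, 1 ≤ c i) ∧ ∑ i, c i * n i = N := by
    intro N hN
    by_contra h
    exact absurd (hf.2 h) (by omega)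
  have hknsum : k ≤ ∑ i, n i := by
    calc k = ∑ _i : Fin k, 1 := by simp
      _ ≤ ∑ i, n i := Finset.sum_le_sum fun i _ => hn1 i
  have hfsum : ∑ i, n i ≤ f + 1 := by
    have hmem : (∑ i, n i) - 1 ∈
        {t : ℕ | ¬ ∃ c : Fin k → ℕ, (∀ i, 1 ≤ c i) ∧ ∑ i, c i * n i = t} := by
      rintro ⟨c, hc1, hcs⟩
      have : ∑ i, n i ≤ ∑ i, c i * n i :=
        Finset.sum_le_sum fun i _ => Nat.le_mul_of_pos_left _ (hc1 i)
      omega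
    have := hf.2 hmem
    omega
  have hlamsum : ∑ i, lam i = d * ∑ i, n i := by
    rw [Finset.mul_sum]; exact Finset.sum_congr rfl fun i _ => (hdn i).symm
  have hklam : k ≤ ∑ i, lam i := by
    calc k = ∑ _i : Fin k, 1 := by simp
      _ ≤ ∑ i, lam i := Finset.sum_le_sum fun i _ => hlam i
  have hdfd : ∑ i, lam i ≤ d * f + d := by
    calc ∑ i, lam i = d * ∑ i, n i := hlamsum
      _ ≤ d * (f + 1) := Nat.mul_le_mul_left _ hfsum
      _ = d * f + d := by ring
  have hk1d : k - 1 ≤ d * f := by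
    have h1 : k - 1 ≤ f := by omega
    calc k - 1 ≤ f := h1
      _ ≤ d * f := Nat.le_mul_of_pos_left _ hd1
  have hkm : k - 1 ≤ (∑ i, μ i) + d * f := by omega
  refine ⟨fun L Y hY hL => ?_, ?_⟩
  · -- upper bound part
    have hYadd : ∀ (i : Fin k) (t z : ℕ),
        List.replicate z () ∈ Y i ↔ List.replicate (z + t * lam i) () ∈ Y i := by
      intro i t
      induction t with
      | zero => simp
      | succ s ihs =>
        intro z
        rw [show z + (s + 1) * lam i = (z + s * lam i) + lam i by ring]
        exact (ihs z).trans (hY i _)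
    have hYmod : ∀ (i : Fin k) (z : ℕ),
        List.replicate z () ∈ Y i ↔ List.replicate (z % lam i) () ∈ Y i := by
      intro i z
      have h := hYadd i (z / lam i) (z % lam i)
      rw [Nat.mod_add_div'] at h
      exact h.symm
    have hLmem : ∀ (i : Fin k) (z : ℕ),
        List.replicate z () ∈ L i ↔ ∃ w, List.replicate w () ∈ Y i ∧ z = μ i + w := by
      intro i z
      rw [hL i, Language.mem_mul]
      constructor
      · rintro ⟨a, ha, b, hb, hab⟩
        change a = List.replicate (μ i) () at ha
        subst ha
        have hlen := congrArg List.length hab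
        simp only [List.length_append, List.length_replicate] at hlen
        refine ⟨b.length, by rw [← unit_word b]; exact hb, by omega⟩
      · rintro ⟨w, hw, rfl⟩
        exact ⟨_, rfl, _, hw, by rw [← List.replicate_add]⟩
    have hchar : ∀ m : ℕ, (List.replicate m () ∈ (List.ofFn L).prod ↔
        ∃ r q : Fin k → ℕ, (∀ i, List.replicate (r i) () ∈ Y i) ∧ (∀ i, r i < lam i) ∧
          m = (∑ i, μ i) + (∑ i, r i) + ∑ i, q i * lam i) := by
      intro m
      rw [replicate_mem_prod_ofFn]
      constructor
      · rintro ⟨y, hy, hsum⟩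
        have h1 : ∀ i, ∃ w, List.replicate w () ∈ Y i ∧ y i = μ i + w :=
          fun i => (hLmem i (y i)).mp (hy i)
        choose z hz hyz using h1
        refine ⟨fun i => z i % lam i, fun i => z i / lam i,
          fun i => (hYmod i (z i)).mp (hz i), fun i => Nat.mod_lt _ (hlam i), ?_⟩
        rw [← hsum, Nat.add_assoc, ← Finset.sum_add_distrib, ← Finset.sum_add_distrib]
        refine Finset.sum_congr rfl fun i _ => ?_
        simp only [hyz i]
        rw [Nat.mod_add_div']
      · rintro ⟨r, q, hr, _, rfl⟩
        refine ⟨fun i => μ i + (r i + q i * lam i),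
          fun i => (hLmem i _).mpr ⟨r i + q i * lam i, (hYadd i (q i) (r i)).mp (hr i), rfl⟩, ?_⟩
        rw [Finset.sum_add_distrib, Finset.sum_add_distrib, Nat.add_assoc]
    have hrsumle : ∀ r : Fin k → ℕ, (∀ i, r i < lam i) → (∑ i, r i) + k ≤ ∑ i, lam i := by
      intro r hrlt
      calc (∑ i, r i) + k = ∑ i, (r i + 1) := by
            rw [Finset.sum_add_distrib]; simp
        _ ≤ ∑ i, lam i := Finset.sum_le_sum fun i _ => hrlt i
    have hper : ∀ m : ℕ, (∑ i, μ i) + d * f - (k - 1) ≤ m →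
        (List.replicate m () ∈ (List.ofFn L).prod ↔
          List.replicate (m + d) () ∈ (List.ofFn L).prod) := by
      intro m hm
      have hm' : (∑ i, μ i) + d * f ≤ m + (k - 1) := by omega
      constructor
      · intro hmem
        obtain ⟨r, q, hr, hrlt, hsum⟩ := (hchar m).mp hmem
        have hrsum := hrsumle r hrlt
        have hdvdS : d ∣ (∑ i, q i * lam i) + d :=
          Nat.dvd_add (Finset.dvd_sum fun i _ => (hdvd i).mul_left _) dvd_rfl
        have hbound : d * f + 1 ≤ ((∑ i, q i * lam i) + d) + ∑ i, lam i := by omega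
        obtain ⟨t, ht⟩ := rep_lemma d f n lam hdn hrepAll _ hdvdS hbound
        exact (hchar _).mpr ⟨r, t, hr, hrlt, by omega⟩
      · intro hmem
        obtain ⟨r, q, hr, hrlt, hsum⟩ := (hchar (m + d)).mp hmem
        have hrsum := hrsumle r hrlt
        have hdvdq : d ∣ ∑ i, q i * lam i :=
          Finset.dvd_sum fun i _ => (hdvd i).mul_left _
        have hq1 : 1 ≤ ∑ i, q i * lam i := by omega
        have hqd : d ≤ ∑ i, q i * lam i := Nat.le_of_dvd hq1 hdvdq
        have hdvdS : d ∣ (∑ i, q i * lam i) - d := Nat.dvd_sub hdvdq dvd_rfl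
        have hbound : d * f + 1 ≤ ((∑ i, q i * lam i) - d) + ∑ i, lam i := by omega
        obtain ⟨t, ht⟩ := rep_lemma d f n lam hdn hrepAll _ hdvdS hbound
        exact (hchar m).mpr ⟨r, t, hr, hrlt, by omega⟩
    refine ⟨hper, ?_⟩
    set μs := (∑ i, μ i) + d * f - (k - 1) with hμs
    have hNpos : 0 < μs + d := by omega
    have hμslt : μs < μs + d := by omega
    set D : DFA Unit (Fin (μs + d)) :=
      { step := fun s _ => if h : s.val + 1 < μs + d then ⟨s.val + 1, h⟩ else ⟨μs, hμslt⟩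
        start := ⟨0, hNpos⟩
        accept := {s | List.replicate s.val () ∈ (List.ofFn L).prod} } with hD
    set st : ℕ → ℕ := fun m => if m < μs + d then m else μs + (m - μs) % d with hst
    have hstlt : ∀ m, st m < μs + d := by
      intro m
      by_cases h : m < μs + d
      · simpa [hst, h] using h
      · have h2 : (m - μs) % d < d := Nat.mod_lt _ hd1
        simp only [hst, h, if_false]
        omega
    have heval : ∀ m, D.eval (List.replicate m ()) = ⟨st m, hstlt m⟩ := by
      intro m
      induction m with
      | zero =>
        rw [List.replicate_zero, DFA.eval_nil]
        apply Fin.ext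
        simp [hD, hst, hNpos]
      | succ m ih =>
        rw [show (m + 1) = m + 1 from rfl, List.replicate_add,
          List.replicate_one, DFA.eval_append_singleton, ih]
        apply Fin.ext
        show (if h : st m + 1 < μs + d then (⟨st m + 1, h⟩ : Fin (μs + d)) else ⟨μs, hμslt⟩).val
          = st (m + 1)
        by_cases hA : m + 1 < μs + d
        · have hA' : m < μs + d := by omega
          have h1 : st m = m := by simp [hst, hA']
          have h2 : st (m + 1) = m + 1 := by simp [hst, hA]
          rw [h1, h2, dif_pos hA]
        · have h2 : st (m + 1) = μs + (m + 1 - μs) % d := by simp [hst, hA]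
          by_cases hB : m < μs + d
          · have h1 : st m = m := by simp [hst, hB]
            have hm1 : m + 1 = μs + d := by omega
            have h3 : m + 1 - μs = d := by omega
            rw [h1, dif_neg (by omega : ¬ (m + 1 < μs + d)), h2, h3, Nat.mod_self]
            simp
          · have h1 : st m = μs + (m - μs) % d := by simp [hst, hB]
            have hr : (m - μs) % d < d := Nat.mod_lt _ hd1
            have hmod : (m + 1 - μs) % d = ((m - μs) % d + 1) % d := by
              have hq : m + 1 - μs = (m - μs) + 1 := by omega
              rw [hq]
              conv_lhs => rw [Nat.add_mod]
              conv_rhs => rw [Nat.add_mod, Nat.mod_mod_of_dvd _ dvd_rfl]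
            by_cases hC : (m - μs) % d + 1 < d
            · rw [h1, dif_pos (by omega : μs + (m - μs) % d + 1 < μs + d), h2, hmod,
                Nat.mod_eq_of_lt hC]
              simp [Nat.add_assoc]
            · have h4 : (m - μs) % d + 1 = d := by omega
              rw [h1, dif_neg (by omega : ¬ (μs + (m - μs) % d + 1 < μs + d)), h2, hmod, h4,
                Nat.mod_self]
              simp
    have hmodP : ∀ m, (List.replicate m () ∈ (List.ofFn L).prod ↔
        List.replicate (st m) () ∈ (List.ofFn L).prod) := by
      intro m
      by_cases h : m < μs + d
      · simp [hst, h]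
      · have hstm : st m = μs + (m - μs) % d := by simp [hst, h]
        have hiter : ∀ j b, μs ≤ b → (List.replicate b () ∈ (List.ofFn L).prod ↔
            List.replicate (b + j * d) () ∈ (List.ofFn L).prod) := by
          intro j
          induction j with
          | zero => simp
          | succ s ihs =>
            intro b hb
            rw [show b + (s + 1) * d = (b + s * d) + d by ring]
            exact (ihs b hb).trans (hper (b + s * d) (by omega))
        have h2 := hiter ((m - μs) / d) (st m) (by omega)
        have h3 : st m + ((m - μs) / d) * d = m := by
          have h4 := Nat.mod_add_div' (m - μs) d
          omega
        rw [h3] at h2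
        exact h2.symm
    refine ⟨Fin (μs + d), inferInstance, D, ?_, by simp⟩
    ext w
    rw [DFA.mem_accepts, show w = List.replicate w.length () from unit_word w]
    rw [heval w.length]
    exact (hmodP w.length).symm
  · intro Q inst D hD
    by_contra hlt
    push_neg at hlt
    set μs := (∑ i, μ i) + d * f - (k - 1) with hμs
    have hcharT : ∀ m : ℕ,
        (List.replicate m () ∈ (List.ofFn fun i => tailCycleLang (μ i) (lam i)).prod ↔
          ∃ M : ℕ, (∃ c : Fin k → ℕ, (∀ i, 1 ≤ c i) ∧ ∑ i, c i * n i = M) ∧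
            m + k = (∑ i, μ i) + d * M) := by
      intro m
      rw [replicate_mem_prod_ofFn]
      constructor
      · rintro ⟨y, hy, hsum⟩
        have h1 : ∀ i, ∃ t, y i = μ i + lam i - 1 + t * lam i := by
          intro i
          have h2 : ∃ t0, (List.replicate (y i) ()).length = μ i + lam i - 1 + t0 * lam i :=
            hy i
          obtain ⟨t0, ht0⟩ := h2
          exact ⟨t0, by simpa using ht0⟩
        choose t ht using h1
        refine ⟨∑ i, (t i + 1) * n i, ⟨fun i => t i + 1, fun i => Nat.succ_le_succ (Nat.zero_le _), rfl⟩, ?_⟩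
        have hterm : ∀ i, y i + 1 = μ i + (t i + 1) * lam i := by
          intro i
          have h3 := hlam i
          have h4 := ht i
          have h5 : (t i + 1) * lam i = t i * lam i + lam i := by ring
          omega
        have h6 : m + k = ∑ i, (y i + 1) := by
          rw [Finset.sum_add_distrib]
          simp [hsum]
        rw [h6, Finset.sum_congr rfl fun i _ => hterm i, Finset.sum_add_distrib]
        congr 1
        rw [Finset.mul_sum]
        refine Finset.sum_congr rfl fun i _ => ?_
        rw [← hdn i]; ring
      · rintro ⟨M, ⟨c, hc1, rfl⟩, hsum⟩
        refine ⟨fun i => μ i + lam i - 1 + (c i - 1) * lam i,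
          fun i => ⟨c i - 1, by simp [tailCycleLang]⟩, ?_⟩
        have hterm : ∀ i, (μ i + lam i - 1 + (c i - 1) * lam i) + 1 = μ i + c i * lam i := by
          intro i
          have h1 := hlam i
          have h2 := hc1 i
          have h3 : c i - 1 + 1 = c i := by omega
          have hx : (c i - 1) * lam i + lam i = c i * lam i := by
            calc (c i - 1) * lam i + lam i = (c i - 1 + 1) * lam i := by ring
              _ = c i * lam i := by rw [h3]
          omega
        have h5 : (∑ i, (μ i + lam i - 1 + (c i - 1) * lam i)) + k
            = ∑ i, (μ i + c i * lam i) := by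
          calc (∑ i, (μ i + lam i - 1 + (c i - 1) * lam i)) + k
              = ∑ i, ((μ i + lam i - 1 + (c i - 1) * lam i) + 1) := by
                have hone : ∑ _i : Fin k, (1 : ℕ) = k := by simp
                conv_rhs => rw [Finset.sum_add_distrib]
                rw [hone]
            _ = ∑ i, (μ i + c i * lam i) := Finset.sum_congr rfl fun i _ => hterm i
        have h6 : ∑ i, (μ i + c i * lam i) = (∑ i, μ i) + d * ∑ i, c i * n i := by
          rw [Finset.sum_add_distrib]
          congr 1
          rw [Finset.mul_sum]
          refine Finset.sum_congr rfl fun i _ => ?_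
          rw [← hdn i]; ring
        show (∑ i, (μ i + lam i - 1 + (c i - 1) * lam i)) = m
        omega
    have key : ∀ (p q : ℕ), p < q → q < μs + d →
        D.eval (List.replicate p ()) = D.eval (List.replicate q ()) → False := by
      intro p q hpq hqlt hevpq
      have hx : ∀ x : ℕ,
          (List.replicate (p + x) () ∈ (List.ofFn fun i => tailCycleLang (μ i) (lam i)).prod ↔
            List.replicate (q + x) () ∈ (List.ofFn fun i => tailCycleLang (μ i) (lam i)).prod) := by
        intro x
        rw [← hD, DFA.mem_accepts, DFA.mem_accepts, List.replicate_add, List.replicate_add]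
        have e1 : D.eval (List.replicate p () ++ List.replicate x ()) =
            D.evalFrom (D.eval (List.replicate p ())) (List.replicate x ()) :=
          D.evalFrom_of_append D.start _ _
        have e2 : D.eval (List.replicate q () ++ List.replicate x ()) =
            D.evalFrom (D.eval (List.replicate q ())) (List.replicate x ()) :=
          D.evalFrom_of_append D.start _ _
        rw [e1, e2, hevpq]
      by_cases hdvdpq : d ∣ (q - p)
      · have hd_le : d ≤ q - p := Nat.le_of_dvd (by omega) hdvdpq
        have hple : p + 1 ≤ μs := by omega
        set x := μs - 1 - p with hx0
        have hpx : (p + x) + k = (∑ i, μ i) + d * f := by omega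
        have hnp : List.replicate (p + x) () ∉
            (List.ofFn fun i => tailCycleLang (μ i) (lam i)).prod := by
          rw [hcharT]
          rintro ⟨M, ⟨c, hc1, hcs⟩, hsum⟩
          have h7 : d * f = d * M := by omega
          have h8 : f = M := Nat.eq_of_mul_eq_mul_left hd1 h7
          exact hf.1 ⟨c, hc1, hcs.trans h8.symm⟩
        have hyp : List.replicate (q + x) () ∈
            (List.ofFn fun i => tailCycleLang (μ i) (lam i)).prod := by
          rw [hcharT]
          obtain ⟨j, hj⟩ := hdvdpq
          have hj1 : j ≠ 0 := by rintro rfl; omega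
          obtain ⟨c, hc1, hcs⟩ := hrepAll (f + j) (by omega)
          have hdj : d * (f + j) = d * f + d * j := by ring
          exact ⟨f + j, ⟨c, hc1, hcs⟩, by omega⟩
        exact hnp ((hx x).mpr hyp)
      · have h6 : p ≤ d * p := Nat.le_mul_of_pos_left _ hd1
        have h5 : d * (f + 1 + p) = d * f + d + d * p := by ring
        have hxge : p + k ≤ (∑ i, μ i) + d * (f + 1 + p) := by omega
        set x := (∑ i, μ i) + d * (f + 1 + p) - (p + k) with hx0
        have hpx : (p + x) + k = (∑ i, μ i) + d * (f + 1 + p) := by omega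
        have hyp : List.replicate (p + x) () ∈
            (List.ofFn fun i => tailCycleLang (μ i) (lam i)).prod := by
          rw [hcharT]
          obtain ⟨c, hc1, hcs⟩ := hrepAll (f + 1 + p) (by omega)
          exact ⟨_, ⟨c, hc1, hcs⟩, hpx⟩
        have hnq : List.replicate (q + x) () ∉
            (List.ofFn fun i => tailCycleLang (μ i) (lam i)).prod := by
          rw [hcharT]
          rintro ⟨M, _, hsum⟩
          apply hdvdpq
          have h8 : q - p = d * M - d * (f + 1 + p) := by omega
          rw [h8]
          exact Nat.dvd_sub (Dvd.intro _ rfl) (Dvd.intro _ rfl)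
        exact hnq ((hx x).mp hyp)
    have hcard : Fintype.card Q < Fintype.card (Fin (μs + d)) := by simpa using hlt
    obtain ⟨p', q', hne, heq⟩ := Fintype.exists_ne_map_eq_of_card_lt
      (fun j : Fin (μs + d) => D.eval (List.replicate j.val ())) hcard
    rcases Nat.lt_trichotomy p'.val q'.val with h | h | h
    · exact key p' q' h q'.2 heq
    · exact hne (Fin.ext h)
    · exact key q' p' h p'.2 heq.symm
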